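/- Let v : Ω → ℝ be smooth. Then v satisfies v₂₃ + v₂·v₁₄ − v₄·v₁₂ = 0 identically on Ω if and only if for every λ ∈ ℝ the vector fields X = ∂₂ + λ·v₂·∂₁ and Y = ∂₄ − λ·∂₃ + λ·v₄·∂₁ on Ω commute: [X, Y] = 0. -/

import Mathlib

/-!
Since the coefficients of `X` and `Y` other than the `∂₁`-ones are constant, `[X, Y]` has only
a `∂₁`-component; after using the symmetry of second partials of `v` it equals `λ²` times
`v₂₃ + v₂v₁₄ − v₄v₁₂`. So the bracket vanishes for every `λ` iff (taking `λ = 1`) that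
expression does.
-/

/-- Partial derivative of `F : ℝ⁴ → ℝ` in the `i`-th coordinate direction. -/
noncomputable def pd (i : Fin 4) (F : (Fin 4 → ℝ) → ℝ) : (Fin 4 → ℝ) → ℝ :=
  fun x => fderiv ℝ F x (Pi.single i 1)

/-- Lie bracket of two vector fields on ℝ⁴, given by their component functions:
`[X, Y]ⁱ = Σⱼ (Xʲ ∂ⱼYⁱ − Yʲ ∂ⱼXⁱ)`. -/
noncomputable def lieB (X Y : (Fin 4 → ℝ) → (Fin 4 → ℝ)) : (Fin 4 → ℝ) → (Fin 4 → ℝ) :=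
  fun x i => ∑ j : Fin 4, (X x j * pd j (fun y => Y y i) x - Y x j * pd j (fun y => X y i) x)

lemma pd_const (i : Fin 4) (c : ℝ) (x : Fin 4 → ℝ) : pd i (fun _ => c) x = 0 := by
  simp [pd]

lemma pd_const_mul {f : (Fin 4 → ℝ) → ℝ} {x : Fin 4 → ℝ} (hf : DifferentiableAt ℝ f x)
    (i : Fin 4) (c : ℝ) : pd i (fun y => c * f y) x = c * pd i f x := by
  simp [pd, fderiv_const_mul hf]

lemma pd_pd_eq_fderiv_fderiv {v : (Fin 4 → ℝ) → ℝ} {x : Fin 4 → ℝ}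
    (hv : DifferentiableAt ℝ (fderiv ℝ v) x) (i j : Fin 4) :
    pd j (pd i v) x = fderiv ℝ (fderiv ℝ v) x (Pi.single j 1) (Pi.single i 1) := by
  change fderiv ℝ (fun y => fderiv ℝ v y (Pi.single i 1)) x _ = _
  simp [fderiv_clm_apply hv (differentiableAt_const _)]

section SecondOrder

variable {v : (Fin 4 → ℝ) → ℝ} {x : Fin 4 → ℝ}

lemma differentiableAt_fderiv_of_contDiffAt_two (hv : ContDiffAt ℝ 2 v x) :
    DifferentiableAt ℝ (fderiv ℝ v) x :=
  (hv.fderiv_right (m := 1) le_rfl).differentiableAt one_ne_zero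

lemma differentiableAt_pd (hv : ContDiffAt ℝ 2 v x) (i : Fin 4) :
    DifferentiableAt ℝ (pd i v) x :=
  (differentiableAt_fderiv_of_contDiffAt_two hv).clm_apply (differentiableAt_const _)

lemma pd_pd_comm (hv : ContDiffAt ℝ 2 v x) (i j : Fin 4) :
    pd j (pd i v) x = pd i (pd j v) x := by
  have hd := differentiableAt_fderiv_of_contDiffAt_two hv
  rw [pd_pd_eq_fderiv_fderiv hd, pd_pd_eq_fderiv_fderiv hd]
  exact hv.isSymmSndFDerivAt (by simp [minSmoothness_of_isRCLikeNormedField]) _ _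

lemma lieB_laxPair_eq_single (hv : ContDiffAt ℝ 2 v x) (lam : ℝ) :
    lieB (fun y => ![lam * pd 1 v y, 1, 0, 0]) (fun y => ![lam * pd 3 v y, 0, -lam, 1]) x =
      Pi.single 0 (lam ^ 2 *
        (pd 2 (pd 1 v) x + pd 1 v x * pd 3 (pd 0 v) x - pd 3 v x * pd 1 (pd 0 v) x)) := by
  have hpd := differentiableAt_pd hv
  ext i
  fin_cases i
  · simp only [lieB, Fin.sum_univ_four, Finset.sum_sub_distrib, Fin.isValue, Fin.zero_eta,
      Matrix.cons_val_zero, Matrix.cons_val_one, Matrix.cons_val, Pi.single_eq_same,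
      pd_const_mul (hpd _), pd_pd_comm hv 3 0, pd_pd_comm hv 3 1, pd_pd_comm hv 1 0, one_mul, zero_mul,
      add_zero, neg_mul, add_sub_add_right_eq_sub]
    ring
  all_goals simp [lieB, pd_const]

end SecondOrder

/-- `v` satisfies `v₂₃ + v₂v₁₄ − v₄v₁₂ = 0` on `Ω` iff for every `λ` the vector fields
`X = ∂₂ + λv₂∂₁` and `Y = ∂₄ − λ∂₃ + λv₄∂₁` commute on `Ω`
(dispersionless Lax pair of the Segre type [31] system).
Coordinates `x¹,…,x⁴` are indexed by `0,…,3`. -/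
theorem statement6 (Ω : Set (Fin 4 → ℝ)) (hΩ : IsOpen Ω)
    (v : (Fin 4 → ℝ) → ℝ) (hv : ContDiffOn ℝ (⊤ : ℕ∞) v Ω) :
    (∀ x ∈ Ω,
        pd 2 (pd 1 v) x + pd 1 v x * pd 3 (pd 0 v) x - pd 3 v x * pd 1 (pd 0 v) x = 0) ↔
    (∀ lam : ℝ, ∀ x ∈ Ω,
        lieB (fun y => ![lam * pd 1 v y, 1, 0, 0])
             (fun y => ![lam * pd 3 v y, 0, -lam, 1]) x = 0) := by
  have hbracket := fun lam x (hx : x ∈ Ω) =>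
    lieB_laxPair_eq_single ((hv.contDiffAt (hΩ.mem_nhds hx)).of_le (by norm_cast)) lam
  constructor
  · intro h lam x hx
    rw [hbracket lam x hx, h x hx, mul_zero, Pi.single_zero]
  · intro h x hx
    simpa using congrFun ((hbracket 1 x hx).symm.trans (h 1 x hx)) 0
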